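/- Dual characterization of empirical DOO (Proposition 2.2). Let δ < 0, let n ≥ 1, let p = (p_1, …, p_n) be a probability vector with p_i > 0 for all i, and let f_1, …, f_n be real numbers. Then the maximum over all probability vectors q = (q_1, …, q_n) (q_i ≥ 0, Σ_i q_i = 1) of Σ_i q_i f_i + (1/δ) Σ_i p_i φ(q_i/p_i) equals the infimum over c ∈ ℝ of −(1/δ) Σ_i p_i φ*(−δ(f_i + c)) − c, where both sides are interpreted as elements of the extended reals. -/

import Mathlib

open scoped BigOperators

noncomputable def phiStar (φ : ℝ → EReal) (ζ : ℝ) : EReal :=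
  ⨆ z : ℝ, ((ζ * z : ℝ) : EReal) - φ z

/-!
Weak duality is the Fenchel–Young inequality `ζ z - φ z ≤ φ* ζ`, applied at `z = q i / p i`.

For the converse, the pairs `(∑ q, r)` with `r` below the primal objective at `q` form a convex
set (convexity of `φ`) which is closed (lower semicontinuity of `φ`, and compactness of
`{q ≥ 0 | ∑ q ≤ B}`). A point `(1, u)` above the primal value is strictly separated from it by a
line, which cannot be vertical because the set contains the downward ray below `(1, ∑ p f)`.
Its slope `c` is a Lagrange multiplier: the line gives `∑ p i (ζ i z i - φ (z i)) ≤ -δ (c + u)` for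
all `z`, and since the constraint is gone the supremum over `z` splits coordinatewise into the
conjugates `φ* (ζ i)`, so the dual value at `c` is at most `u`.
-/

open Filter Topology

namespace EReal

@[norm_cast]
lemma coe_finset_sum {ι : Type*} (s : Finset ι) (g : ι → ℝ) :
    ((∑ i ∈ s, g i : ℝ) : EReal) = ∑ i ∈ s, (g i : EReal) :=
  map_sum (⟨⟨Real.toEReal, coe_zero⟩, coe_add⟩ : ℝ →+ EReal) g s

lemma coe_mul_sum_of_nonneg {ι : Type*} (s : Finset ι) {a : ℝ} (ha : 0 ≤ a) (g : ι → EReal) :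
    (a : EReal) * ∑ i ∈ s, g i = ∑ i ∈ s, (a : EReal) * g i :=
  map_sum (⟨⟨((a : EReal) * ·), mul_zero _⟩,
    left_distrib_of_nonneg_of_ne_top (by exact_mod_cast ha) (coe_ne_top a)⟩ : EReal →+ EReal) g s

lemma sum_eq_bot_of_eq_bot {ι : Type*} {s : Finset ι} {g : ι → EReal} {j : ι} (hj : j ∈ s)
    (hbot : g j = ⊥) : ∑ i ∈ s, g i = ⊥ := by
  classical
  rw [← Finset.add_sum_erase s g hj, hbot, bot_add]

lemma sum_eq_top_of_eq_top {ι : Type*} {s : Finset ι} {g : ι → EReal} {j : ι} (hj : j ∈ s)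
    (htop : g j = ⊤) (hg : ∀ i ∈ s, 0 ≤ g i) : ∑ i ∈ s, g i = ⊤ :=
  top_le_iff.1 (htop ▸ Finset.single_le_sum hg hj)

lemma coe_toReal_of_nonneg {x : EReal} (hx : 0 ≤ x) (htop : x ≠ ⊤) : (x.toReal : EReal) = x :=
  coe_toReal htop (ne_bot_of_le_ne_bot zero_ne_bot hx)

lemma continuous_coe_mul (a : ℝ) : Continuous fun y : EReal => (a : EReal) * y := by
  rcases eq_or_ne a 0 with rfl | ha
  · simpa using continuous_const
  have ha0 : (a : EReal) ≠ 0 := by exact_mod_cast ha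
  exact continuous_iff_continuousAt.2 fun y =>
    (continuousAt_mul (.inl ha0) (.inl ha0) (.inl (coe_ne_bot a)) (.inl (coe_ne_top a))).comp
      (continuousAt_const.prodMk continuousAt_id)

lemma coe_mul_iSup_of_pos {α : Sort*} {a : ℝ} (ha : 0 < a) (g : α → EReal) :
    (a : EReal) * ⨆ x, g x = ⨆ x, (a : EReal) * g x :=
  Monotone.map_iSup_of_continuousAt (continuous_coe_mul a).continuousAt
    (fun _ _ h => mul_le_mul_of_nonneg_left h (by exact_mod_cast ha.le)) (coe_mul_bot_of_pos ha)

lemma sum_iSup_le_iSup_sum {ι α : Type*} [DecidableEq ι] [Nonempty α] (s : Finset ι)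
    (H : ι → α → EReal) : ∑ i ∈ s, ⨆ x, H i x ≤ ⨆ z : ι → α, ∑ i ∈ s, H i (z i) := by
  induction s using Finset.induction_on with
  | empty => simp
  | insert j s hj ih =>
    rw [Finset.sum_insert hj]
    refine add_le_of_forall_lt fun a ha b hb => ?_
    obtain ⟨x, hx⟩ := lt_iSup_iff.1 ha
    obtain ⟨z, hz⟩ := lt_iSup_iff.1 (hb.trans_le ih)
    refine le_iSup_of_le (Function.update z j x) ?_
    rw [Finset.sum_insert hj, Function.update_self,
      Finset.sum_congr rfl fun i hi => by rw [Function.update_of_ne (ne_of_mem_of_not_mem hi hj)]]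
    exact add_le_add hx.le hz.le

lemma lowerSemicontinuous_sum {ι α : Type*} [TopologicalSpace α] (s : Finset ι)
    {g : ι → α → EReal} (hg : ∀ i ∈ s, LowerSemicontinuous (g i)) (hg0 : ∀ i ∈ s, ∀ x, 0 ≤ g i x) :
    LowerSemicontinuous fun x => ∑ i ∈ s, g i x := by
  classical
  induction s using Finset.induction_on with
  | empty => simpa using lowerSemicontinuous_const
  | insert j s hj ih =>
    simp only [Finset.sum_insert hj]
    refine (hg j (s.mem_insert_self j)).add' (ih (fun i hi => hg i (Finset.mem_insert_of_mem hi))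
      fun i hi => hg0 i (Finset.mem_insert_of_mem hi)) fun x => continuousAt_add ?_ ?_
    · exact .inr (ne_bot_of_le_ne_bot zero_ne_bot
        (Finset.sum_nonneg fun i hi => hg0 i (Finset.mem_insert_of_mem hi) x))
    · exact .inl (ne_bot_of_le_ne_bot zero_ne_bot (hg0 j (s.mem_insert_self j) x))

lemma coe_le_coe_add_coe_mul_iff {r a δ : ℝ} (hδ : δ < 0) (x : EReal) :
    (r : EReal) ≤ a + ((1 / δ : ℝ) : EReal) * x ↔ x ≤ ((δ * (r - a) : ℝ) : EReal) := by
  have hδ' : 1 / δ < 0 := one_div_neg.2 hδ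
  induction x using EReal.rec with
  | bot => rw [coe_mul_bot_of_neg hδ']; simp
  | top =>
    rw [coe_mul_top_of_neg hδ', add_bot, le_bot_iff, top_le_iff]
    exact iff_of_false (coe_ne_bot r) (coe_ne_top _)
  | coe x =>
    norm_cast
    rw [← sub_le_iff_le_add', one_div, ← div_eq_inv_mul, le_div_iff_of_neg hδ, mul_comm]

end EReal

lemma exists_nonvertical_separating_line {A : Set (ℝ × ℝ)} (hconv : Convex ℝ A)
    (hclosed : IsClosed A) (hdown : ∀ x ∈ A, ∀ r ≤ x.2, (x.1, r) ∈ A) {t r u : ℝ}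
    (hr : (t, r) ∈ A) (hu : (t, u) ∉ A) :
    ∃ c : ℝ, ∀ x ∈ A, c * x.1 + x.2 < c * t + u := by
  obtain ⟨L, s, hLA, hLu⟩ := geometric_hahn_banach_closed_point hconv hclosed hu
  have hL : ∀ x : ℝ × ℝ, L x = L (1, 0) * x.1 + L (0, 1) * x.2 := fun ⟨a, b⟩ => by
    have : ((a, b) : ℝ × ℝ) = a • ((1 : ℝ), (0 : ℝ)) + b • ((0 : ℝ), (1 : ℝ)) := by simp
    rw [this, map_add, map_smul, map_smul, smul_eq_mul, smul_eq_mul, mul_comm, mul_comm b]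
    simp
  -- otherwise the point `(t, min r u)` of `A` would lie on the same side of the line as `(t, u)`
  have hβ : 0 < L (0, 1) := by
    by_contra! hβ
    have h := hLA _ (hdown _ hr (min r u) (min_le_left r u))
    rw [hL] at h hLu
    simp only at h hLu
    nlinarith [mul_le_mul_of_nonpos_left (min_le_right r u) hβ]
  refine ⟨L (1, 0) / L (0, 1), fun x hx => ?_⟩
  have h := (hLA x hx).trans hLu
  rw [hL x, hL (t, u)] at h
  rw [div_mul_eq_mul_div, div_mul_eq_mul_div, div_add' _ _ _ hβ.ne', div_add' _ _ _ hβ.ne',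
    div_lt_div_iff_of_pos_right hβ]
  linarith

lemma isClosed_image_sum_prod {ι : Type*} [Fintype ι] {C : Set ((ι → ℝ) × ℝ)} (hC : IsClosed C)
    (hC0 : ∀ x ∈ C, ∀ i, 0 ≤ x.1 i) : IsClosed ((fun x => (∑ i, x.1 i, x.2)) '' C) := by
  refine IsSeqClosed.isClosed fun y L hy hL => ?_
  choose x hxC hxy using hy
  obtain rfl : y = fun k => (∑ i, (x k).1 i, (x k).2) := funext fun k => (hxy k).symm
  have hsum : Tendsto (fun k => ∑ i, (x k).1 i) atTop (𝓝 L.1) :=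
    (continuous_fst.tendsto L).comp hL
  obtain ⟨B, hB⟩ := hsum.bddAbove_range
  have hbox : ∀ k, (x k).1 ∈ Set.Icc 0 fun _ => B := fun k =>
    ⟨fun i => hC0 _ (hxC k) i, fun i => (Finset.single_le_sum (fun j _ => hC0 _ (hxC k) j)
      (Finset.mem_univ i)).trans (hB ⟨k, rfl⟩)⟩
  obtain ⟨q, -, σ, hσ, hq⟩ := isCompact_Icc.tendsto_subseq hbox
  have hsnd : Tendsto (fun k => (x (σ k)).2) atTop (𝓝 L.2) :=
    (continuous_snd.tendsto L).comp (hL.comp hσ.tendsto_atTop)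
  have hqL : ∑ i, q i = L.1 :=
    tendsto_nhds_unique (((continuous_finsetSum _ fun i _ => continuous_apply i).tendsto q).comp hq)
      (hsum.comp hσ.tendsto_atTop)
  exact ⟨(q, L.2), hC.mem_of_tendsto (hq.prodMk_nhds hsnd) (.of_forall fun k => hxC _),
    Prod.ext hqL rfl⟩

section PhiDivergence

variable {ι : Type*} [Fintype ι] {φ : ℝ → EReal} {p : ι → ℝ}

noncomputable def phiDivergence (φ : ℝ → EReal) (q p : ι → ℝ) : EReal :=
  ∑ i, (p i : EReal) * φ (q i / p i)

lemma phiDivergence_eq_top (hφ : ∀ z, 0 ≤ φ z) (hp : ∀ i, 0 < p i) {q : ι → ℝ} {j : ι}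
    (hj : φ (q j / p j) = ⊤) : phiDivergence φ q p = ⊤ :=
  EReal.sum_eq_top_of_eq_top (Finset.mem_univ j) (by rw [hj, EReal.coe_mul_top_of_pos (hp j)])
    fun i _ => mul_nonneg (by exact_mod_cast (hp i).le) (hφ _)

lemma phiDivergence_eq_coe (hφ : ∀ z, 0 ≤ φ z) {q : ι → ℝ} (hq : ∀ i, φ (q i / p i) ≠ ⊤) :
    phiDivergence φ q p = ((∑ i, p i * (φ (q i / p i)).toReal : ℝ) : EReal) := by
  rw [phiDivergence]
  push_cast
  refine Finset.sum_congr rfl fun i _ => ?_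
  rw [EReal.coe_toReal_of_nonneg (hφ _) (hq i)]

lemma phiDivergence_self (hφ1 : φ 1 = 0) (hp : ∀ i, p i ≠ 0) : phiDivergence φ p p = 0 := by
  simp [phiDivergence, div_self (hp _), hφ1]

lemma lowerSemicontinuous_phiDivergence (hφ : ∀ z, 0 ≤ φ z) (hlsc : LowerSemicontinuous φ)
    (hp : ∀ i, 0 < p i) : LowerSemicontinuous fun q => phiDivergence φ q p := by
  refine EReal.lowerSemicontinuous_sum _ (fun i _ => ?_) fun i _ q =>
    mul_nonneg (by exact_mod_cast (hp i).le) (hφ _)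
  exact (EReal.continuous_coe_mul (p i)).comp_lowerSemicontinuous (hlsc.comp (by fun_prop))
    fun _ _ h => mul_le_mul_of_nonneg_left h (by exact_mod_cast (hp i).le)

lemma phiDivergence_convex_comb_le
    (hconv : ∀ x y a b : ℝ, 0 ≤ a → 0 ≤ b → a + b = 1 →
      φ (a * x + b * y) ≤ (a : EReal) * φ x + (b : EReal) * φ y)
    (hp : ∀ i, 0 < p i) {q q' : ι → ℝ} {a b : ℝ} (ha : 0 ≤ a) (hb : 0 ≤ b) (hab : a + b = 1) :
    phiDivergence φ (a • q + b • q') p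
      ≤ (a : EReal) * phiDivergence φ q p + (b : EReal) * phiDivergence φ q' p := by
  unfold phiDivergence
  rw [EReal.coe_mul_sum_of_nonneg _ ha, EReal.coe_mul_sum_of_nonneg _ hb, ← Finset.sum_add_distrib]
  refine Finset.sum_le_sum fun i _ => ?_
  have hpi : (0 : EReal) ≤ p i := by exact_mod_cast (hp i).le
  calc (p i : EReal) * φ ((a • q + b • q') i / p i)
      = (p i : EReal) * φ (a * (q i / p i) + b * (q' i / p i)) := by
        congr 2; simp only [Pi.add_apply, Pi.smul_apply, smul_eq_mul]; ring
    _ ≤ (p i : EReal) * ((a : EReal) * φ (q i / p i) + (b : EReal) * φ (q' i / p i)) :=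
        mul_le_mul_of_nonneg_left (hconv _ _ a b ha hb hab) hpi
    _ = (a : EReal) * ((p i : EReal) * φ (q i / p i))
          + (b : EReal) * ((p i : EReal) * φ (q' i / p i)) := by
        rw [EReal.left_distrib_of_nonneg_of_ne_top hpi (EReal.coe_ne_top _), mul_left_comm,
          mul_left_comm (p i : EReal)]

end PhiDivergence

section Duality

variable {ι : Type*} [Fintype ι] {φ : ℝ → EReal} {p f : ι → ℝ} {δ : ℝ}

noncomputable def dooObjective (φ : ℝ → EReal) (p f : ι → ℝ) (δ : ℝ) (q : ι → ℝ) : EReal :=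
  ((∑ i, q i * f i : ℝ) : EReal) + ((1 / δ : ℝ) : EReal) * phiDivergence φ q p

noncomputable def dooDual (φ : ℝ → EReal) (p f : ι → ℝ) (δ c : ℝ) : EReal :=
  ((-(1 / δ) : ℝ) : EReal) * (∑ i, ((p i : ℝ) : EReal) * phiStar φ (-δ * (f i + c))) - (c : EReal)

/-- The hypograph of the value function `t ↦ sup {dooObjective q | ∑ q = t}`. -/
def dooHypograph (φ : ℝ → EReal) (p f : ι → ℝ) (δ : ℝ) : Set (ℝ × ℝ) :=
  (fun x : (ι → ℝ) × ℝ => (∑ i, x.1 i, x.2)) '' {x | (x.2 : EReal) ≤ dooObjective φ p f δ x.1}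

lemma dooObjective_eq_bot (hδ : δ < 0) {q : ι → ℝ} (hq : phiDivergence φ q p = ⊤) :
    dooObjective φ p f δ q = ⊥ := by
  rw [dooObjective, hq, EReal.coe_mul_top_of_neg (one_div_neg.2 hδ), EReal.add_bot]

lemma dooObjective_eq_coe (hφ : ∀ z, 0 ≤ φ z) {q : ι → ℝ} (hq : ∀ i, φ (q i / p i) ≠ ⊤) :
    dooObjective φ p f δ q
      = ((∑ i, q i * f i + 1 / δ * ∑ i, p i * (φ (q i / p i)).toReal : ℝ) : EReal) := by
  rw [dooObjective, phiDivergence_eq_coe hφ hq]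
  norm_cast

lemma nonneg_of_coe_le_dooObjective (hφ : ∀ z, 0 ≤ φ z) (hneg : ∀ z, z < 0 → φ z = ⊤)
    (hp : ∀ i, 0 < p i) (hδ : δ < 0) {q : ι → ℝ} {r : ℝ} (hr : (r : EReal) ≤ dooObjective φ p f δ q)
    (i : ι) : 0 ≤ q i := by
  by_contra! hqi
  have hbot := dooObjective_eq_bot (f := f) hδ
    (phiDivergence_eq_top hφ hp (hneg _ (div_neg_of_neg_of_pos hqi (hp i))))
  exact EReal.coe_ne_bot r (le_bot_iff.1 (hbot ▸ hr))

/-- With `ψ i = φ (q i / p i)`, the Fenchel–Young sum at `ζ i = -δ (f i + c)`, `z i = q i / p i`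
is `-δ` times the Lagrangian `c ∑ q + (primal objective)`. -/
lemma sum_fenchel_eq (hp : ∀ i, p i ≠ 0) (hδ : δ ≠ 0) (q ψ : ι → ℝ) (c : ℝ) :
    ∑ i, p i * (-δ * (f i + c) * (q i / p i) - ψ i)
      = -δ * (c * ∑ i, q i + (∑ i, q i * f i + 1 / δ * ∑ i, p i * ψ i)) := by
  have hterm : ∀ i, p i * (-δ * (f i + c) * (q i / p i) - ψ i)
      = -δ * (c * q i + q i * f i) - p i * ψ i := fun i => by
    field_simp [hp i]; ring
  simp only [hterm, Finset.sum_sub_distrib, ← Finset.mul_sum, Finset.sum_add_distrib]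
  field_simp
  ring

lemma dooObjective_le_dooDual (hφ : ∀ z, 0 ≤ φ z) (hp : ∀ i, 0 < p i) (hδ : δ < 0)
    {q : ι → ℝ} (hq : ∑ i, q i = 1) (c : ℝ) : dooObjective φ p f δ q ≤ dooDual φ p f δ c := by
  by_cases hfin : ∀ i, φ (q i / p i) ≠ ⊤
  swap
  · push Not at hfin
    obtain ⟨j, hj⟩ := hfin
    rw [dooObjective_eq_bot hδ (phiDivergence_eq_top hφ hp hj)]
    exact bot_le
  set ψ : ι → ℝ := fun i => (φ (q i / p i)).toReal
  have hψ : ∀ i, φ (q i / p i) = ψ i := fun i => (EReal.coe_toReal_of_nonneg (hφ _) (hfin i)).symm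
  have fenchel_young : ∀ i, (((-δ * (f i + c)) * (q i / p i) - ψ i : ℝ) : EReal)
      ≤ phiStar φ (-δ * (f i + c)) := fun i => by
    rw [EReal.coe_sub, ← hψ]
    exact le_iSup (fun z : ℝ => ((-δ * (f i + c) * z : ℝ) : EReal) - φ z) _
  have hsum : ((∑ i, p i * ((-δ * (f i + c)) * (q i / p i) - ψ i) : ℝ) : EReal)
      ≤ ∑ i, (p i : EReal) * phiStar φ (-δ * (f i + c)) := by
    push_cast
    exact Finset.sum_le_sum fun i _ =>
      mul_le_mul_of_nonneg_left (by exact_mod_cast fenchel_young i) (by exact_mod_cast (hp i).le)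
  rw [dooObjective_eq_coe hφ hfin, dooDual]
  calc ((∑ i, q i * f i + 1 / δ * ∑ i, p i * ψ i : ℝ) : EReal)
      = (((-(1 / δ)) * ∑ i, p i * ((-δ * (f i + c)) * (q i / p i) - ψ i) - c : ℝ) : EReal) := by
        rw [sum_fenchel_eq (fun i => (hp i).ne') hδ.ne, hq]
        congr 1
        field_simp [hδ.ne]
        ring
    _ ≤ _ := by
        rw [EReal.coe_sub, EReal.coe_mul]
        exact EReal.sub_le_sub (mul_le_mul_of_nonneg_left hsum
          (by exact_mod_cast neg_nonneg.2 (one_div_neg.2 hδ).le)) le_rfl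

lemma coe_le_dooObjective_iff (hδ : δ < 0) {q : ι → ℝ} {r : ℝ} :
    (r : EReal) ≤ dooObjective φ p f δ q
      ↔ phiDivergence φ q p ≤ ((δ * (r - ∑ i, q i * f i) : ℝ) : EReal) :=
  EReal.coe_le_coe_add_coe_mul_iff hδ _

lemma isClosed_dooHypograph (hφ : ∀ z, 0 ≤ φ z) (hneg : ∀ z, z < 0 → φ z = ⊤)
    (hlsc : LowerSemicontinuous φ) (hp : ∀ i, 0 < p i) (hδ : δ < 0) :
    IsClosed (dooHypograph φ p f δ) := by
  refine isClosed_image_sum_prod ?_ fun x hx => nonneg_of_coe_le_dooObjective hφ hneg hp hδ hx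
  simp only [coe_le_dooObjective_iff hδ]
  exact (lowerSemicontinuous_phiDivergence hφ hlsc hp).isClosed_epigraph.preimage
    (continuous_fst.prodMk (continuous_coe_real_ereal.comp (by fun_prop)))

lemma convex_dooHypograph (hconv : ∀ x y a b : ℝ, 0 ≤ a → 0 ≤ b → a + b = 1 →
      φ (a * x + b * y) ≤ (a : EReal) * φ x + (b : EReal) * φ y)
    (hp : ∀ i, 0 < p i) (hδ : δ < 0) : Convex ℝ (dooHypograph φ p f δ) := by
  refine Convex.is_linear_image ?_ (f := fun x : (ι → ℝ) × ℝ => (∑ i, x.1 i, x.2))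
    ⟨fun x y => by simp [Finset.sum_add_distrib], fun a x => by simp [Finset.mul_sum]⟩
  intro x hx y hy a b ha hb hab
  simp only [Set.mem_ofPred_eq, coe_le_dooObjective_iff hδ] at hx hy ⊢
  calc phiDivergence φ (a • x + b • y).1 p
      ≤ (a : EReal) * phiDivergence φ x.1 p + (b : EReal) * phiDivergence φ y.1 p :=
        phiDivergence_convex_comb_le hconv hp ha hb hab
    _ ≤ (a : EReal) * ((δ * (x.2 - ∑ i, x.1 i * f i) : ℝ) : EReal)
          + (b : EReal) * ((δ * (y.2 - ∑ i, y.1 i * f i) : ℝ) : EReal) := by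
        gcongr
    _ = ((δ * ((a • x + b • y).2 - ∑ i, (a • x + b • y).1 i * f i) : ℝ) : EReal) := by
        norm_cast
        simp only [Prod.fst_add, Prod.snd_add, Prod.smul_fst, Prod.smul_snd, Pi.add_apply,
          Pi.smul_apply, smul_eq_mul, add_mul, Finset.sum_add_distrib, mul_assoc, ← Finset.mul_sum]
        ring

lemma dooDual_le_of_forall_lt (hφ : ∀ z, 0 ≤ φ z) (hp : ∀ i, 0 < p i) (hδ : δ < 0) {c u : ℝ}
    (hsep : ∀ x ∈ dooHypograph φ p f δ, c * x.1 + x.2 < c * 1 + u) :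
    dooDual φ p f δ c ≤ u := by
  classical
  have fenchel_sum_le : ∀ q : ι → ℝ,
      ∑ i, (p i : EReal) * (((-δ * (f i + c)) * (q i / p i) : ℝ) - φ (q i / p i))
        ≤ ((-δ * (c + u) : ℝ) : EReal) := by
    intro q
    by_cases hfin : ∀ i, φ (q i / p i) ≠ ⊤
    swap
    · push Not at hfin
      obtain ⟨j, hj⟩ := hfin
      rw [EReal.sum_eq_bot_of_eq_bot (Finset.mem_univ j)
        (by rw [hj, EReal.sub_top, EReal.coe_mul_bot_of_pos (hp j)])]
      exact bot_le
    set ψ : ι → ℝ := fun i => (φ (q i / p i)).toReal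
    have hψ : ∀ i, φ (q i / p i) = ψ i := fun i =>
      (EReal.coe_toReal_of_nonneg (hφ _) (hfin i)).symm
    have hlt := hsep _ ⟨(q, _), (dooObjective_eq_coe hφ hfin).ge, rfl⟩
    calc ∑ i, (p i : EReal) * (((-δ * (f i + c)) * (q i / p i) : ℝ) - φ (q i / p i))
        = ((∑ i, p i * (-δ * (f i + c) * (q i / p i) - ψ i) : ℝ) : EReal) := by
          simp only [hψ]
          norm_cast
      _ ≤ ((-δ * (c + u) : ℝ) : EReal) := by
          rw [sum_fenchel_eq (fun i => (hp i).ne') hδ.ne]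
          exact_mod_cast mul_le_mul_of_nonneg_left (by linarith) (neg_nonneg.2 hδ.le)
  have hsup : ∑ i, (p i : EReal) * phiStar φ (-δ * (f i + c)) ≤ ((-δ * (c + u) : ℝ) : EReal) := by
    simp only [phiStar, EReal.coe_mul_iSup_of_pos (hp _)]
    refine (EReal.sum_iSup_le_iSup_sum _ _).trans (iSup_le fun z => ?_)
    simpa [mul_div_cancel_left₀ _ (hp _).ne'] using fenchel_sum_le fun i => p i * z i
  calc dooDual φ p f δ c
      ≤ ((-(1 / δ) : ℝ) : EReal) * ((-δ * (c + u) : ℝ) : EReal) - c :=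
        EReal.sub_le_sub (mul_le_mul_of_nonneg_left hsup
          (by exact_mod_cast neg_nonneg.2 (one_div_neg.2 hδ).le)) le_rfl
    _ = u := by
        norm_cast
        field_simp [hδ.ne]
        ring

lemma iInf_dooDual_le (hφ : ∀ z, 0 ≤ φ z) (hφ1 : φ 1 = 0) (hneg : ∀ z, z < 0 → φ z = ⊤)
    (hconv : ∀ x y a b : ℝ, 0 ≤ a → 0 ≤ b → a + b = 1 →
      φ (a * x + b * y) ≤ (a : EReal) * φ x + (b : EReal) * φ y)
    (hlsc : LowerSemicontinuous φ) (hp : ∀ i, 0 < p i) (hps : ∑ i, p i = 1) (hδ : δ < 0) :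
    ⨅ c, dooDual φ p f δ c
      ≤ ⨆ q : {q : ι → ℝ // (∀ i, 0 ≤ q i) ∧ ∑ i, q i = 1}, dooObjective φ p f δ q.1 := by
  refine EReal.le_of_forall_lt_iff_le.1 fun u hu => ?_
  have hp_mem : ((1 : ℝ), ∑ i, p i * f i) ∈ dooHypograph φ p f δ :=
    ⟨(p, ∑ i, p i * f i), by simp [dooObjective, phiDivergence_self hφ1 fun i => (hp i).ne'],
      by simp [hps]⟩
  have hu_not : ((1 : ℝ), u) ∉ dooHypograph φ p f δ := by
    rintro ⟨⟨q, r⟩, hqr, hx⟩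
    obtain ⟨hq1, rfl⟩ := Prod.mk.inj hx
    exact (hqr.trans (le_iSup_of_le ⟨q, nonneg_of_coe_le_dooObjective hφ hneg hp hδ hqr, hq1⟩
      le_rfl)).not_gt hu
  have hdown : ∀ x ∈ dooHypograph φ p f δ, ∀ r ≤ x.2, (x.1, r) ∈ dooHypograph φ p f δ := by
    rintro _ ⟨⟨q, s⟩, hqs, rfl⟩ r hr
    exact ⟨(q, r), (EReal.coe_le_coe_iff.2 hr).trans hqs, rfl⟩
  obtain ⟨c, hc⟩ := exists_nonvertical_separating_line (convex_dooHypograph hconv hp hδ)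
    (isClosed_dooHypograph hφ hneg hlsc hp hδ) hdown hp_mem hu_not
  exact (iInf_le _ c).trans (dooDual_le_of_forall_lt hφ hp hδ hc)

end Duality

theorem empirical_doo_duality_general
    (φ : ℝ → EReal)
    (hconv : ∀ x y a b : ℝ, 0 ≤ a → 0 ≤ b → a + b = 1 →
      φ (a * x + b * y) ≤ (a : EReal) * φ x + (b : EReal) * φ y)
    (hlsc : LowerSemicontinuous φ)
    (hnonneg : ∀ z : ℝ, 0 ≤ z → 0 ≤ φ z)
    (hone : φ 1 = 0)
    (hneg : ∀ z : ℝ, z < 0 → φ z = ⊤)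
    (n : ℕ)
    (p : Fin n → ℝ) (hp : ∀ i, 0 < p i) (hps : ∑ i, p i = 1)
    (f : Fin n → ℝ) (δ : ℝ) (hδ : δ < 0) :
    (⨆ q : {q : Fin n → ℝ // (∀ i, 0 ≤ q i) ∧ ∑ i, q i = 1},
        ((∑ i, q.1 i * f i : ℝ) : EReal)
          + ((1 / δ : ℝ) : EReal) * ∑ i, ((p i : ℝ) : EReal) * φ (q.1 i / p i))
      = ⨅ c : ℝ,
        ((-(1 / δ) : ℝ) : EReal) * (∑ i, ((p i : ℝ) : EReal) * phiStar φ (-δ * (f i + c)))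
          - (c : EReal) := by
  have hφ : ∀ z, 0 ≤ φ z := fun z =>
    (le_or_gt 0 z).elim (hnonneg z) fun hz => (hneg z hz).symm ▸ le_top
  exact le_antisymm
    (iSup_le fun q => le_iInf fun c => dooObjective_le_dooDual hφ hp hδ q.2.2 c)
    (iInf_dooDual_le hφ hone hneg hconv hlsc hp hps hδ)

/-- Dual characterization of the empirical DOO problem (Proposition 2.2):
for `δ < 0`, the maximum over probability vectors `q` of
`Σ q_i f_i + (1/δ) Σ p_i φ(q_i/p_i)` equals the infimum over `c ∈ ℝ` of
`−(1/δ) Σ p_i φ*(−δ(f_i + c)) − c`, both sides in the extended reals. -/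
theorem empirical_doo_duality
    (φ : ℝ → EReal)
    (hconv : ∀ x y a b : ℝ, 0 ≤ a → 0 ≤ b → a + b = 1 →
      φ (a * x + b * y) ≤ (a : EReal) * φ x + (b : EReal) * φ y)
    (hlsc : LowerSemicontinuous φ)
    (hnonneg : ∀ z : ℝ, 0 ≤ z → 0 ≤ φ z)
    (hone : φ 1 = 0)
    (hneg : ∀ z : ℝ, z < 0 → φ z = ⊤)
    (n : ℕ) (hn : 1 ≤ n)
    (p : Fin n → ℝ) (hp : ∀ i, 0 < p i) (hps : ∑ i, p i = 1)
    (f : Fin n → ℝ) (δ : ℝ) (hδ : δ < 0) :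
    (⨆ q : {q : Fin n → ℝ // (∀ i, 0 ≤ q i) ∧ ∑ i, q i = 1},
        ((∑ i, q.1 i * f i : ℝ) : EReal)
          + ((1 / δ : ℝ) : EReal) * ∑ i, ((p i : ℝ) : EReal) * φ (q.1 i / p i))
      = ⨅ c : ℝ,
        ((-(1 / δ) : ℝ) : EReal) * (∑ i, ((p i : ℝ) : EReal) * phiStar φ (-δ * (f i + c)))
          - (c : EReal) :=
  empirical_doo_duality_general φ hconv hlsc hnonneg hone hneg n p hp hps f δ hδ
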